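/- arXiv:1411.4922 — 8 statements merged into one kernel-verified Lean document; each statement's English description precedes it below -/
import Mathlib

section
/- Let G be a cycle on an even number n of vertices and let u,v be distinct vertices with d(u,v) odd. Then fix(u,v) = V(G): every vertex of the cycle fixes the pair (u,v). -/
def fixesPair {V : Type*} (G : SimpleGraph V) (x u v : V) : Prop :=
  ∀ g : G ≃g G, g x = x → g u ≠ v ∧ g v ≠ u

def fixSet {V : Type*} (G : SimpleGraph V) (u v : V) : Set V :=
  {x | fixesPair G x u v}

lemma adj_parity {n : ℕ} (hn : Even n) {a b : Fin n}
    (h : (SimpleGraph.cycleGraph n).Adj a b) : (a.val + b.val) % 2 = 1 := by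
  obtain ⟨k, hk⟩ := hn
  have h2 : (2 : ℕ) ∣ n := ⟨k, by omega⟩
  rw [SimpleGraph.cycleGraph_adj'] at h
  have ha := a.isLt
  have hb := b.isLt
  rcases h with h | h
  · have : (a - b).val = (n - b.val + a.val) % n := rfl
    rw [this] at h
    have := Nat.mod_mod_of_dvd (n - b.val + a.val) h2
    omega
  · have : (b - a).val = (n - a.val + b.val) % n := rfl
    rw [this] at h
    have := Nat.mod_mod_of_dvd (n - a.val + b.val) h2
    omega

lemma walk_parity {n : ℕ} (hn : Even n) {a b : Fin n}
    (p : (SimpleGraph.cycleGraph n).Walk a b) :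
    p.length % 2 = (a.val + b.val) % 2 := by
  induction p with
  | nil => simp only [SimpleGraph.Walk.length_nil]; omega
  | cons h q ih =>
    have := adj_parity hn h
    rw [SimpleGraph.Walk.length_cons]
    omega

/-- In an even cycle, if `d(u,v)` is odd then every vertex fixes the pair `(u,v)`. -/
theorem stmt4 {n : ℕ} (hn : Even n) (hn4 : 4 ≤ n) (u v : Fin n) (huv : u ≠ v)
    (hd : Odd ((SimpleGraph.cycleGraph n).dist u v)) :
    fixSet (SimpleGraph.cycleGraph n) u v = Set.univ := by
  have hpre := SimpleGraph.cycleGraph_preconnected (n := n)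
  -- u + v is odd
  obtain ⟨q, hq⟩ := (hpre u v).exists_walk_length_eq_dist
  have huvodd : (u.val + v.val) % 2 = 1 := by
    have h1 := walk_parity hn q
    obtain ⟨m, hm⟩ := hd
    omega
  ext x
  simp only [Set.mem_univ, iff_true, fixSet, Set.mem_setOf_eq]
  intro g hgx
  constructor
  · intro hgu
    obtain ⟨p, -⟩ := (hpre x u).exists_walk_length_eq_dist
    have h1 := walk_parity hn p
    have h2 := walk_parity hn ((p.map g.toHom).copy hgx hgu)
    rw [SimpleGraph.Walk.length_copy, SimpleGraph.Walk.length_map] at h2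
    omega
  · intro hgv
    obtain ⟨p, -⟩ := (hpre x v).exists_walk_length_eq_dist
    have h1 := walk_parity hn p
    have h2 := walk_parity hn ((p.map g.toHom).copy hgx hgv)
    rw [SimpleGraph.Walk.length_copy, SimpleGraph.Walk.length_map] at h2
    omega
end

section
/- Let G be a connected graph and u ≠ v similar vertices. Then fix(u,v) = {u,v} if and only if u and v are distance similar, i.e., d(u,w) = d(v,w) for all w ∈ V(G) \ {u,v}. -/
private lemma iso_dist_le {V : Type*} {G : SimpleGraph V} (g : G ≃g G) (a b : V) :
    G.dist (g a) (g b) ≤ G.dist a b := by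
  rcases eq_or_ne (G.dist a b) 0 with h | h
  · rcases (SimpleGraph.dist_eq_zero_iff_eq_or_not_reachable.mp h) with rfl | h'
    · simp [SimpleGraph.dist_self]
    · rw [SimpleGraph.dist_eq_zero_of_not_reachable (fun hr => h' (hr.elim fun p =>
        ⟨(p.map g.symm.toHom).copy (g.symm_apply_apply a) (g.symm_apply_apply b)⟩))]
      exact Nat.zero_le _
  · obtain ⟨p, hp⟩ := SimpleGraph.exists_walk_of_dist_ne_zero h
    calc G.dist (g a) (g b) ≤ (p.map g.toHom).length := SimpleGraph.dist_le _
      _ = p.length := SimpleGraph.Walk.length_map _ _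
      _ = G.dist a b := hp

private lemma iso_dist_eq {V : Type*} {G : SimpleGraph V} (g : G ≃g G) (a b : V) :
    G.dist (g a) (g b) = G.dist a b := by
  refine le_antisymm (iso_dist_le g a b) ?_
  have := iso_dist_le g.symm (g a) (g b)
  simpa using this

/-- `fix(u,v) = {u,v}` iff `u` and `v` are distance similar. -/
theorem stmt6 {V : Type*} (G : SimpleGraph V) (hc : G.Connected) (u v : V) (huv : u ≠ v)
    (hsim : ∃ g : G ≃g G, g u = v) :
    fixSet G u v = {u, v} ↔ ∀ w : V, w ≠ u → w ≠ v → G.dist u w = G.dist v w := by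
  classical
  constructor
  · intro h w hwu hwv
    by_contra hd
    have hw : w ∈ fixSet G u v := by
      intro g hg
      constructor
      · intro hguv
        apply hd
        have := iso_dist_eq g u w
        rw [hguv, hg] at this
        exact this.symm
      · intro hgvu
        apply hd
        have := iso_dist_eq g v w
        rw [hgvu, hg] at this
        exact this
    rw [h] at hw
    rcases hw with hw | hw
    · exact hwu hw
    · exact hwv hw
  · intro hdist
    -- the transposition (u v) is an automorphism
    have hadj : ∀ w : V, w ≠ u → w ≠ v → (G.Adj u w ↔ G.Adj v w) := by
      intro w hwu hwv
      rw [← SimpleGraph.dist_eq_one_iff_adj, ← SimpleGraph.dist_eq_one_iff_adj,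
        hdist w hwu hwv]
    have key : ∀ a b : V, G.Adj a b → G.Adj (Equiv.swap u v a) (Equiv.swap u v b) := by
      intro a b hab
      rcases eq_or_ne a u with rfl | hau
      · rcases eq_or_ne b v with rfl | hbv
        · simpa [Equiv.swap_apply_left, Equiv.swap_apply_right] using hab.symm
        · have hbu : b ≠ a := hab.ne'
          rw [Equiv.swap_apply_left, Equiv.swap_apply_of_ne_of_ne hbu hbv]
          exact (hadj b hbu hbv).mp hab
      · rcases eq_or_ne a v with rfl | hav
        · rcases eq_or_ne b u with rfl | hbu
          · simpa [Equiv.swap_apply_left, Equiv.swap_apply_right] using hab.symm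
          · have hbv : b ≠ a := hab.ne'
            rw [Equiv.swap_apply_right, Equiv.swap_apply_of_ne_of_ne hbu hbv]
            exact (hadj b hbu hbv).mpr hab
        · rw [Equiv.swap_apply_of_ne_of_ne hau hav]
          rcases eq_or_ne b u with rfl | hbu
          · rw [Equiv.swap_apply_left]
            exact ((hadj a hau hav).mp hab.symm).symm
          · rcases eq_or_ne b v with rfl | hbv
            · rw [Equiv.swap_apply_right]
              exact ((hadj a hau hav).mpr hab.symm).symm
            · rw [Equiv.swap_apply_of_ne_of_ne hbu hbv]; exact hab
    have hτadj : ∀ a b : V, G.Adj (Equiv.swap u v a) (Equiv.swap u v b) ↔ G.Adj a b := by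
      intro a b
      constructor
      · intro h
        have := key _ _ h
        simpa using this
      · exact key a b
    let τ : G ≃g G := ⟨Equiv.swap u v, hτadj _ _⟩
    ext x
    simp only [Set.mem_insert_iff, Set.mem_singleton_iff]
    constructor
    · intro hx
      by_contra hx'
      push_neg at hx'
      obtain ⟨hxu, hxv⟩ := hx'
      have hτx : τ x = x := Equiv.swap_apply_of_ne_of_ne hxu hxv
      exact (hx τ hτx).1 (Equiv.swap_apply_left u v)
    · rintro (rfl | rfl) <;> intro g hg <;> constructor
      · rw [hg]; exact huv
      · intro h; exact huv (g.injective (hg.trans h.symm))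
      · intro h; exact huv (g.injective (h.trans hg.symm))
      · rw [hg]; exact huv.symm
end

section
/- Let G = K_{m,n} be a complete bipartite graph with parts A (|A|=m) and B (|B|=n). If u,v are distinct vertices in the same part, then fix(u,v) = {u,v}. -/
section Aux

variable {α β : Type*} [DecidableEq α] [DecidableEq β]

lemma swapL_isRight (u v : α) (z : α ⊕ β) :
    ((Equiv.swap (Sum.inl u) (Sum.inl v) : (α ⊕ β) ≃ (α ⊕ β)) z).isRight = z.isRight := by
  rcases z with a | b
  · by_cases h1 : (Sum.inl a : α ⊕ β) = Sum.inl u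
    · rw [h1, Equiv.swap_apply_left]; rfl
    · by_cases h2 : (Sum.inl a : α ⊕ β) = Sum.inl v
      · rw [h2, Equiv.swap_apply_right]; rfl
      · rw [Equiv.swap_apply_of_ne_of_ne h1 h2]
  · rw [Equiv.swap_apply_of_ne_of_ne (by simp) (by simp)]

lemma swapL_isLeft (u v : α) (z : α ⊕ β) :
    ((Equiv.swap (Sum.inl u) (Sum.inl v) : (α ⊕ β) ≃ (α ⊕ β)) z).isLeft = z.isLeft := by
  rcases z with a | b
  · by_cases h1 : (Sum.inl a : α ⊕ β) = Sum.inl u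
    · rw [h1, Equiv.swap_apply_left]; rfl
    · by_cases h2 : (Sum.inl a : α ⊕ β) = Sum.inl v
      · rw [h2, Equiv.swap_apply_right]; rfl
      · rw [Equiv.swap_apply_of_ne_of_ne h1 h2]
  · rw [Equiv.swap_apply_of_ne_of_ne (by simp) (by simp)]

lemma swapR_isRight (u v : β) (z : α ⊕ β) :
    ((Equiv.swap (Sum.inr u) (Sum.inr v) : (α ⊕ β) ≃ (α ⊕ β)) z).isRight = z.isRight := by
  rcases z with a | b
  · rw [Equiv.swap_apply_of_ne_of_ne (by simp) (by simp)]
  · by_cases h1 : (Sum.inr b : α ⊕ β) = Sum.inr u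
    · rw [h1, Equiv.swap_apply_left]; rfl
    · by_cases h2 : (Sum.inr b : α ⊕ β) = Sum.inr v
      · rw [h2, Equiv.swap_apply_right]; rfl
      · rw [Equiv.swap_apply_of_ne_of_ne h1 h2]

lemma swapR_isLeft (u v : β) (z : α ⊕ β) :
    ((Equiv.swap (Sum.inr u) (Sum.inr v) : (α ⊕ β) ≃ (α ⊕ β)) z).isLeft = z.isLeft := by
  rcases z with a | b
  · rw [Equiv.swap_apply_of_ne_of_ne (by simp) (by simp)]
  · by_cases h1 : (Sum.inr b : α ⊕ β) = Sum.inr u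
    · rw [h1, Equiv.swap_apply_left]; rfl
    · by_cases h2 : (Sum.inr b : α ⊕ β) = Sum.inr v
      · rw [h2, Equiv.swap_apply_right]; rfl
      · rw [Equiv.swap_apply_of_ne_of_ne h1 h2]

def swapIsoL (u v : α) :
    completeBipartiteGraph α β ≃g completeBipartiteGraph α β where
  toEquiv := Equiv.swap (Sum.inl u) (Sum.inl v)
  map_rel_iff' := by
    intro a b
    simp only [completeBipartiteGraph_adj, swapL_isLeft, swapL_isRight]

def swapIsoR (u v : β) :
    completeBipartiteGraph α β ≃g completeBipartiteGraph α β where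
  toEquiv := Equiv.swap (Sum.inr u) (Sum.inr v)
  map_rel_iff' := by
    intro a b
    simp only [completeBipartiteGraph_adj, swapR_isLeft, swapR_isRight]

lemma fixSet_pair (G : SimpleGraph (α ⊕ β)) (u v : α ⊕ β) (huv : u ≠ v)
    (g : G ≃g G) (hgu : g u = v) (hfix : ∀ z, z ≠ u → z ≠ v → g z = z) :
    fixSet G u v = {u, v} := by
  ext x
  constructor
  · intro hx
    by_contra hne
    simp only [Set.mem_insert_iff, Set.mem_singleton_iff, not_or] at hne
    obtain ⟨h1, h2⟩ := (hx g (hfix x hne.1 hne.2))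
    exact h1 hgu
  · intro hx g' hg'
    rcases hx with rfl | rfl
    · refine ⟨by rw [hg']; exact huv, fun h => ?_⟩
      exact huv (g'.injective (h.trans hg'.symm)).symm
    · refine ⟨fun h => ?_, by rw [hg']; exact huv.symm⟩
      exact huv (g'.injective (h.trans hg'.symm))

end Aux

/-- In `K_{m,n}`, for two distinct vertices in the same part, the fixing set is the pair itself. -/
theorem stmt8 {m n : ℕ}
    (u v : Fin m) (huv : u ≠ v) (u' v' : Fin n) (huv' : u' ≠ v') :
    fixSet (completeBipartiteGraph (Fin m) (Fin n)) (Sum.inl u) (Sum.inl v) =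
        {Sum.inl u, Sum.inl v} ∧
    fixSet (completeBipartiteGraph (Fin m) (Fin n)) (Sum.inr u') (Sum.inr v') =
        {Sum.inr u', Sum.inr v'} := by
  constructor
  · apply fixSet_pair _ _ _ (by simpa using huv) (swapIsoL u v)
    · exact Equiv.swap_apply_left _ _
    · intro z h1 h2
      exact Equiv.swap_apply_of_ne_of_ne h1 h2
  · apply fixSet_pair _ _ _ (by simpa using huv') (swapIsoR u' v')
    · exact Equiv.swap_apply_left _ _
    · intro z h1 h2
      exact Equiv.swap_apply_of_ne_of_ne h1 h2
end

section
/- Let G be a graph of order n ≥ 2 with fixing number k ≥ 1. Then the number of edges of the fixing graph F(G) satisfies |E(F(G))| ≤ n(C(n,2) − k + 1), where C(n,2) = n(n−1)/2. Moreover, every vertex x ∈ S(G) has degree at most |V_s(G)| − k + 1 in F(G). -/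
open scoped Classical

/-- `D` is a fixing (determining) set: the only automorphism fixing `D` pointwise is the identity. -/
def isFixingSet {V : Type*} (G : SimpleGraph V) (D : Set V) : Prop :=
  ∀ g : G ≃g G, (∀ v ∈ D, g v = v) → ∀ v : V, g v = v

/-- `S(G)`: vertices moved by some automorphism. -/
noncomputable def SG {n : ℕ} (G : SimpleGraph (Fin n)) : Finset (Fin n) :=
  Finset.univ.filter (fun v => ∃ g : G ≃g G, g v ≠ v)

/-- `V_s(G)`: (unordered, encoded as increasing ordered) pairs of distinct similar vertices. -/
noncomputable def VsG {n : ℕ} (G : SimpleGraph (Fin n)) : Finset (Fin n × Fin n) :=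
  Finset.univ.filter (fun p => p.1 < p.2 ∧ ∃ g : G ≃g G, g p.1 = p.2)

/-- Degree of `x ∈ S(G)` in the fixing graph `F(G)`. -/
noncomputable def degF {n : ℕ} (G : SimpleGraph (Fin n)) (x : Fin n) : ℕ :=
  ((VsG G).filter (fun p => fixesPair G x p.1 p.2)).card

/-- Number of edges of the fixing graph `F(G)`. -/
noncomputable def edgesF {n : ℕ} (G : SimpleGraph (Fin n)) : ℕ :=
  ∑ x ∈ SG G, degF G x

/-!
Fix a vertex `x` and let `D` consist of `x` together with the smaller vertex `u` of every pair
`(u, v) ∈ V_s(G)` that `x` does not fix. Then `D` is a fixing set: if an automorphism `g` fixes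
`D` pointwise and `w` is the least vertex it moves, then `w < g w` (as `g w` is moved too), and
the pair `(w, g w)` is not fixed by `x` because `g x = x`; so `w ∈ D`, a contradiction. Hence
`k ≤ |D|`, i.e. `x` fails to fix at least `k - 1` pairs, and its degree in `F(G)` is at most
`|V_s(G)| - k + 1`. Summing over the at most `n` vertices of `S(G)`, with `|V_s(G)| ≤ C(n,2)`,
bounds the number of edges.
-/

lemma isFixingSet_of_mem_of_not_fixesPair {V : Type*} [LinearOrder V] [WellFoundedLT V]
    (G : SimpleGraph V) {D : Set V} {x : V} (hx : x ∈ D)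
    (hD : ∀ u v, u < v → (∃ g : G ≃g G, g u = v) → ¬ fixesPair G x u v → u ∈ D) :
    isFixingSet G D := by
  intro g hg v
  induction v using WellFoundedLT.induction with
  | ind v ih =>
    rcases lt_trichotomy (g v) v with hlt | heq | hgt
    · exact absurd (ih _ hlt) fun h => hlt.ne (g.injective h)
    · exact heq
    · refine hg v (hD v (g v) hgt ⟨g, rfl⟩ fun hfix => ?_)
      exact (hfix g (hg x hx)).1 rfl

lemma VsG_card_le_choose_two {n : ℕ} (G : SimpleGraph (Fin n)) :
    (VsG G).card ≤ n.choose 2 := by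
  calc (VsG G).card ≤ (Finset.univ.filter fun p : Fin n × Fin n => p.1 < p.2).card :=
        Finset.card_le_card fun p hp => by simp_all [VsG]
    _ = n.choose 2 := by rw [Fintype.card_product_filter_lt, Fintype.card_fin]

lemma le_card_not_fixesPair_add_one {n : ℕ} (G : SimpleGraph (Fin n)) {k : ℕ}
    (hk : k ∈ lowerBounds {m | ∃ D : Finset (Fin n), isFixingSet G ↑D ∧ D.card = m})
    (x : Fin n) :
    k ≤ ((VsG G).filter fun p => ¬ fixesPair G x p.1 p.2).card + 1 := by
  set U := (VsG G).filter fun p => ¬ fixesPair G x p.1 p.2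
  have hD : isFixingSet G ↑(insert x (U.image Prod.fst)) := by
    refine isFixingSet_of_mem_of_not_fixesPair G (x := x) (by simp) fun u v huv hsim hnfix => ?_
    have hpair : (u, v) ∈ U := by simp [U, VsG, huv, hsim, hnfix]
    simpa using Or.inr ⟨v, hpair⟩
  calc k ≤ (insert x (U.image Prod.fst)).card := hk ⟨_, hD, rfl⟩
    _ ≤ (U.image Prod.fst).card + 1 := Finset.card_insert_le _ _
    _ ≤ U.card + 1 := by grw [Finset.card_image_le]

lemma degF_le {n : ℕ} (G : SimpleGraph (Fin n)) {k : ℕ}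
    (hk : k ∈ lowerBounds {m | ∃ D : Finset (Fin n), isFixingSet G ↑D ∧ D.card = m})
    (x : Fin n) :
    degF G x ≤ (VsG G).card - k + 1 := by
  have hsplit := Finset.card_filter_add_card_filter_not (s := VsG G)
    (fun p => fixesPair G x p.1 p.2)
  have := le_card_not_fixesPair_add_one G hk x
  rw [degF]
  omega

theorem stmt11_general {n : ℕ} (G : SimpleGraph (Fin n)) (k : ℕ)
    (hfix : IsLeast {m | ∃ D : Finset (Fin n), isFixingSet G ↑D ∧ D.card = m} k) :
    edgesF G ≤ n * (n.choose 2 - k + 1) ∧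
      ∀ x ∈ SG G, degF G x ≤ (VsG G).card - k + 1 := by
  refine ⟨?_, fun x _ => degF_le G hfix.2 x⟩
  calc edgesF G ≤ (SG G).card * ((VsG G).card - k + 1) :=
        Finset.sum_le_card_nsmul _ _ _ fun x _ => degF_le G hfix.2 x
    _ ≤ n * (n.choose 2 - k + 1) := by
        gcongr
        · simpa using Finset.card_le_univ (SG G)
        · exact VsG_card_le_choose_two G

/-- If `G` has order `n ≥ 2` and fixing number `k ≥ 1`, then `|E(F(G))| ≤ n(C(n,2)-k+1)` and
every `x ∈ S(G)` has degree at most `|V_s(G)| - k + 1` in `F(G)`. -/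
theorem stmt11 {n : ℕ} (hn : 2 ≤ n) (G : SimpleGraph (Fin n)) (k : ℕ) (hk : 1 ≤ k)
    (hfix : IsLeast {m | ∃ D : Finset (Fin n), isFixingSet G ↑D ∧ D.card = m} k) :
    edgesF G ≤ n * (n.choose 2 - k + 1) ∧
      ∀ x ∈ SG G, degF G x ≤ (VsG G).card - k + 1 :=
  stmt11_general G k hfix
end

section
/- For the complete graph K_n with n ≥ 3 and minimum fixing set D of size n−1, the fixing share of each v ∈ D equals n/2; consequently the fixing sum F_sum(K_n) = (n−1)n/2 and the fixing percentage F%(K_n) = 2/n. -/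
open scoped Classical

/-- `D` is a minimum fixing set. -/
def isMinFixingSet {n : ℕ} (G : SimpleGraph (Fin n)) (D : Finset (Fin n)) : Prop :=
  isFixingSet G ↑D ∧ ∀ E : Finset (Fin n), isFixingSet G ↑E → D.card ≤ E.card

/-- `F(x)`: the fixed neighborhood of `x`, the set of similar pairs fixed by `x`. -/
noncomputable def FxG {n : ℕ} (G : SimpleGraph (Fin n)) (x : Fin n) :
    Finset (Fin n × Fin n) :=
  (VsG G).filter (fun p => fixesPair G x p.1 p.2)

/-- `𝓕(u,v) = {F(y) : y ∈ D, (u,v) ∈ F(y)}`. -/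
noncomputable def calF {n : ℕ} (G : SimpleGraph (Fin n)) (D : Finset (Fin n))
    (p : Fin n × Fin n) : Finset (Finset (Fin n × Fin n)) :=
  (D.filter (fun y => p ∈ FxG G y)).image (FxG G)

/-- The fixing share `f(x;D) = Σ_{(u,v) ∈ F(x)} 1/|𝓕(u,v)|`. -/
noncomputable def fshare {n : ℕ} (G : SimpleGraph (Fin n)) (D : Finset (Fin n))
    (x : Fin n) : ℚ :=
  ∑ p ∈ FxG G x, ((calF G D p).card : ℚ)⁻¹

/-- The fixing sum `F_sum(G) = Σ_{x ∈ D} f(x;D)`. -/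
noncomputable def Fsum {n : ℕ} (G : SimpleGraph (Fin n)) (D : Finset (Fin n)) : ℚ :=
  ∑ x ∈ D, fshare G D x

/-- The fixing percentage `F%(G) = |D| / F_sum(G)`. -/
noncomputable def Fpct {n : ℕ} (G : SimpleGraph (Fin n)) (D : Finset (Fin n)) : ℚ :=
  (D.card : ℚ) / Fsum G D

open Finset

section MinMaxPair

variable {α : Type*} [LinearOrder α]

lemma Finset.pair_min_max (a b : α) : ({min a b, max a b} : Finset α) = {a, b} := by
  rcases le_total a b with h | h <;> simp [h, Finset.pair_comm]

lemma injOn_min_max_of_ne (v : α) : Set.InjOn (fun u => (min u v, max u v)) {u | u ≠ v} := by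
  intro u hu u' hu' h
  simp only [Prod.mk.injEq, Set.mem_ofPred_eq] at hu hu' h
  grind

end MinMaxPair

section CompleteGraph

variable {n : ℕ}

/-- In `K_n` every permutation is an automorphism, so a vertex `x` off the pair `{u, v}` does
not fix it: the transposition `(u v)` fixes `x` and swaps `u` with `v`. -/
lemma mem_FxG_top {x : Fin n} {p : Fin n × Fin n} :
    p ∈ FxG (⊤ : SimpleGraph (Fin n)) x ↔ p.1 < p.2 ∧ x ∈ ({p.1, p.2} : Finset (Fin n)) := by
  obtain ⟨u, v⟩ := p
  rw [FxG, mem_filter, VsG, mem_filter]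
  simp only [fixesPair, mem_univ, true_and, mem_insert, mem_singleton]
  constructor
  · rintro ⟨⟨huv, -⟩, hfix⟩
    refine ⟨huv, ?_⟩
    by_contra! hx
    exact (hfix (SimpleGraph.Iso.completeGraph (Equiv.swap u v))
      (Equiv.swap_apply_of_ne_of_ne hx.1 hx.2)).1 (Equiv.swap_apply_left u v)
  · rintro ⟨huv, hx⟩
    refine ⟨⟨huv, SimpleGraph.Iso.completeGraph (Equiv.swap u v), Equiv.swap_apply_left u v⟩, ?_⟩
    intro g hgx
    rcases hx with rfl | rfl
    · exact ⟨by rw [hgx]; exact huv.ne, fun h => huv.ne' (g.injective (h.trans hgx.symm))⟩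
    · exact ⟨fun h => huv.ne (g.injective (h.trans hgx.symm)), by rw [hgx]; exact huv.ne'⟩

lemma min_max_mem_FxG_top {u x : Fin n} (hux : u ≠ x) :
    (min u x, max u x) ∈ FxG (⊤ : SimpleGraph (Fin n)) x := by
  rw [mem_FxG_top, Finset.pair_min_max]
  exact ⟨min_lt_max.mpr hux, mem_insert_of_mem (mem_singleton_self x)⟩

lemma FxG_top_eq_image (x : Fin n) :
    FxG (⊤ : SimpleGraph (Fin n)) x = (univ.erase x).image (fun u => (min u x, max u x)) := by
  ext p
  simp only [mem_image, mem_erase, mem_univ, and_true]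
  constructor
  · intro hp
    obtain ⟨a, b⟩ := p
    rw [mem_FxG_top, mem_insert, mem_singleton] at hp
    obtain ⟨hab, rfl | rfl⟩ := hp
    · exact ⟨b, hab.ne', by simp [hab.le]⟩
    · exact ⟨a, hab.ne, by simp [hab.le]⟩
  · rintro ⟨u, hux, rfl⟩
    exact min_max_mem_FxG_top hux

lemma FxG_top_injective (hn : 3 ≤ n) : Function.Injective (FxG (⊤ : SimpleGraph (Fin n))) := by
  intro x y hxy
  by_contra hne
  obtain ⟨z, hzx, hzy⟩ : ∃ z : Fin n, z ≠ x ∧ z ≠ y := by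
    obtain ⟨z, hz, hzy⟩ := exists_mem_ne (s := univ.erase x)
      (by rw [card_erase_of_mem (mem_univ x), card_univ, Fintype.card_fin]; omega) y
    exact ⟨z, ne_of_mem_erase hz, hzy⟩
  have hz := min_max_mem_FxG_top hzx
  rw [hxy, mem_FxG_top, Finset.pair_min_max, mem_insert, mem_singleton] at hz
  rcases hz.2 with h | h
  · exact hzy h.symm
  · exact hne h.symm

/-- Distinct vertices fix distinct sets of pairs, so `𝓕(u,v)` is counted by the vertices
of `D` lying on the pair. -/
lemma card_calF_top (hn : 3 ≤ n) (D : Finset (Fin n)) {p : Fin n × Fin n} (hp : p.1 < p.2) :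
    #(calF (⊤ : SimpleGraph (Fin n)) D p) = #(D ∩ {p.1, p.2}) := by
  rw [calF, card_image_of_injective _ (FxG_top_injective hn), ← filter_mem_eq_inter]
  congr 1
  exact filter_congr fun y _ => by rw [mem_FxG_top, and_iff_right hp]

lemma card_erase_inter_pair {w u v : Fin n} (huv : u ≠ v) (hvw : v ≠ w) :
    #(univ.erase w ∩ {u, v}) = if u = w then 1 else 2 := by
  rw [erase_inter, univ_inter]
  split_ifs with huw
  · subst huw
    rw [erase_insert_eq_erase, erase_eq_of_notMem (by simpa using hvw.symm), card_singleton]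
  · rw [erase_eq_of_notMem (by simp [Ne.symm huw, Ne.symm hvw]), card_pair huv]

/-- The pair `{v, w}` is fixed by `v` alone, the other `n - 2` pairs through `v` by both
of their endpoints. -/
lemma fshare_top_erase (hn : 3 ≤ n) {v w : Fin n} (hvw : v ≠ w) :
    fshare (⊤ : SimpleGraph (Fin n)) (univ.erase w) v = (n : ℚ) / 2 := by
  have hshare : ∀ u ∈ univ.erase v,
      (#(calF (⊤ : SimpleGraph (Fin n)) (univ.erase w) (min u v, max u v)) : ℚ)⁻¹
        = if u = w then 1 else 1 / 2 := by
    intro u hu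
    have huv := ne_of_mem_erase hu
    rw [card_calF_top hn _ (min_lt_max.mpr huv), Finset.pair_min_max,
      card_erase_inter_pair huv hvw]
    split_ifs <;> norm_num
  have hw : w ∈ univ.erase v := mem_erase.mpr ⟨hvw.symm, mem_univ w⟩
  have hcard : #((univ.erase v).erase w) = n - 2 := by
    rw [card_erase_of_mem hw, card_erase_of_mem (mem_univ v), card_univ, Fintype.card_fin]; rfl
  rw [fshare, FxG_top_eq_image, sum_image ((injOn_min_max_of_ne v).mono fun _ => ne_of_mem_erase), sum_congr rfl hshare,
    ← add_sum_erase _ _ hw, if_pos rfl,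
    sum_congr rfl fun u hu => if_neg (ne_of_mem_erase hu), sum_const, hcard, nsmul_eq_mul,
    Nat.cast_sub (by omega)]
  ring

end CompleteGraph

theorem stmt14_general {n : ℕ} (hn : 3 ≤ n) (D : Finset (Fin n))
    (hcard : D.card = n - 1) :
    (∀ v ∈ D, fshare (⊤ : SimpleGraph (Fin n)) D v = (n : ℚ) / 2) ∧
      Fsum (⊤ : SimpleGraph (Fin n)) D = ((n : ℚ) - 1) * n / 2 ∧
      Fpct (⊤ : SimpleGraph (Fin n)) D = 2 / (n : ℚ) := by
  obtain ⟨w, hw⟩ : ∃ w, Dᶜ = {w} :=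
    card_eq_one.mp (by rw [card_compl, hcard, Fintype.card_fin]; omega)
  obtain rfl : D = univ.erase w := by rw [← compl_compl D, hw, compl_singleton]
  have hshare : ∀ v ∈ univ.erase w, fshare (⊤ : SimpleGraph (Fin n)) (univ.erase w) v = n / 2 :=
    fun v hv => fshare_top_erase hn (ne_of_mem_erase hv)
  have hcast : ((#(univ.erase w) : ℕ) : ℚ) = n - 1 := by
    rw [hcard, Nat.cast_sub (by omega), Nat.cast_one]
  have hsum : Fsum (⊤ : SimpleGraph (Fin n)) (univ.erase w) = ((n : ℚ) - 1) * n / 2 := by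
    rw [Fsum, sum_congr rfl hshare, sum_const, nsmul_eq_mul, hcast]
    ring
  refine ⟨hshare, hsum, ?_⟩
  have hn1 : (n : ℚ) - 1 ≠ 0 := by
    have : (3 : ℚ) ≤ n := by exact_mod_cast hn
    linarith
  rw [Fpct, hsum, hcast]
  field_simp

/-- In `K_n` (`n ≥ 3`) with a minimum fixing set `D` (of size `n-1`), each `v ∈ D` has
fixing share `n/2`; hence `F_sum = (n-1)n/2` and `F% = 2/n`. -/
theorem stmt14 {n : ℕ} (hn : 3 ≤ n) (D : Finset (Fin n))
    (hD : isMinFixingSet (⊤ : SimpleGraph (Fin n)) D) (hcard : D.card = n - 1) :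
    (∀ v ∈ D, fshare (⊤ : SimpleGraph (Fin n)) D v = (n : ℚ) / 2) ∧
      Fsum (⊤ : SimpleGraph (Fin n)) D = ((n : ℚ) - 1) * n / 2 ∧
      Fpct (⊤ : SimpleGraph (Fin n)) D = 2 / (n : ℚ) :=
  stmt14_general hn D hcard
end

section
/- For a path P_n (n ≥ 2) with minimum fixing set D = {v} where v is an end vertex: f(v;D) = ⌊n/2⌋ = F_sum(P_n), and F%(P_n) = 1/⌊n/2⌋. -/
open scoped Classical

/-!
An automorphism of the path `0 - 1 - ⋯ - n` sends the end vertex `0` to an end vertex, and one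
that fixes `0` fixes every vertex, by induction along the path. So `{0}` is a fixing set and the
automorphisms are the identity and the reversal `i ↦ n - i`. Hence `F(0)` is all of `V_s`, namely
the `⌊(n + 1)/2⌋` pairs `(i, n - i)` with `i < n - i`, and with `D = {0}` each of them contributes
`1/|𝓕(u,v)| = 1` to the fixing share of `0`.
-/

namespace SimpleGraph.pathGraph

variable {n : ℕ}

def revIso (n : ℕ) : pathGraph n ≃g pathGraph n where
  toEquiv := Fin.revPerm
  map_rel_iff' := by
    intro a b
    simp only [Fin.revPerm_apply, pathGraph_adj, Fin.val_rev]
    omega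

@[simp]
lemma revIso_apply (i : Fin n) : revIso n i = i.rev := rfl

lemma val_eq_one_of_adj_zero {a : Fin (n + 1)} (h : (pathGraph (n + 1)).Adj 0 a) : a.val = 1 := by
  rw [pathGraph_adj] at h
  simp only [Fin.val_zero] at h
  omega

lemma iso_apply_zero_eq_zero_or_last (g : pathGraph (n + 1) ≃g pathGraph (n + 1)) :
    g 0 = 0 ∨ g 0 = Fin.last n := by
  by_contra! ⟨h0, hlast⟩
  have hpos : 0 < (g 0).val := Fin.pos_iff_ne_zero.mpr h0
  have hlt : (g 0).val < n := Fin.val_lt_last hlast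
  -- an inner vertex has two neighbours, but `0` has only one
  have hpred : (pathGraph (n + 1)).Adj 0 (g.symm ⟨(g 0).val - 1, by omega⟩) := by
    rw [← g.map_adj_iff, RelIso.apply_symm_apply, pathGraph_adj]
    dsimp only
    omega
  have hsucc : (pathGraph (n + 1)).Adj 0 (g.symm ⟨(g 0).val + 1, by omega⟩) := by
    rw [← g.map_adj_iff, RelIso.apply_symm_apply, pathGraph_adj]
    dsimp only
    omega
  have := congrArg (Fin.val ∘ g)
    (Fin.ext ((val_eq_one_of_adj_zero hpred).trans (val_eq_one_of_adj_zero hsucc).symm))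
  simp only [Function.comp_apply, RelIso.apply_symm_apply] at this
  omega

lemma iso_apply_eq_self_of_map_zero (g : pathGraph (n + 1) ≃g pathGraph (n + 1)) (h : g 0 = 0)
    (i : Fin (n + 1)) : g i = i := by
  suffices key : ∀ i : Fin (n + 1), ∀ j ≤ i, g j = j from key i i le_rfl
  intro i
  induction i using Fin.induction with
  | zero => intro j hj; rwa [nonpos_iff_eq_zero.mp hj]
  | succ i ih =>
    intro j hj
    rcases hj.lt_or_eq with hj | rfl
    · exact ih j (Fin.le_castSucc_iff.mpr hj)
    -- `g (i + 1)` is a neighbour of `g i = i`, and it is not `i - 1 = g (i - 1)`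
    have hadj : (pathGraph (n + 1)).Adj i.castSucc (g i.succ) := by
      rw [← ih _ le_rfl, g.map_adj_iff, pathGraph_adj]
      simp
    rw [pathGraph_adj] at hadj
    rcases hadj with hup | hdown
    · exact Fin.ext (by simp only [Fin.val_castSucc, Fin.val_succ] at hup ⊢; omega)
    · simp only [Fin.val_castSucc] at hdown
      have hprev : g i.succ = ⟨i - 1, by omega⟩ := Fin.ext (by simp only; omega)
      have := congrArg Fin.val (g.injective (hprev.trans (ih _ (by simp [Fin.le_def])).symm))
      simp only [Fin.val_succ] at this
      omega

lemma isFixingSet_singleton_zero : isFixingSet (pathGraph (n + 1)) {0} :=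
  fun g hg => iso_apply_eq_self_of_map_zero g (hg 0 rfl)

lemma iso_eq_refl_or_revIso (g : pathGraph (n + 1) ≃g pathGraph (n + 1)) :
    g = Iso.refl ∨ g = revIso (n + 1) := by
  rcases iso_apply_zero_eq_zero_or_last g with h | h
  · left
    ext i
    exact congrArg Fin.val (iso_apply_eq_self_of_map_zero g h i)
  · right
    have hrev := iso_apply_eq_self_of_map_zero (g.trans (revIso _)) (by simp [h])
    ext i
    simpa using congrArg (Fin.val ∘ Fin.rev) (hrev i)

lemma mem_VsG_iff {p : Fin (n + 1) × Fin (n + 1)} :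
    p ∈ VsG (pathGraph (n + 1)) ↔ p.1 < p.2 ∧ p.2 = p.1.rev := by
  simp only [VsG, Finset.mem_filter, Finset.mem_univ, true_and]
  constructor
  · rintro ⟨hlt, g, hg⟩
    rcases iso_eq_refl_or_revIso g with rfl | rfl
    · exact absurd hg hlt.ne
    · exact ⟨hlt, hg.symm⟩
  · rintro ⟨hlt, h⟩
    exact ⟨hlt, revIso _, h.symm⟩

lemma card_VsG : (VsG (pathGraph (n + 1))).card = (n + 1) / 2 := by
  have : VsG (pathGraph (n + 1)) = ({i | (i : ℕ) < (n + 1) / 2} : Finset (Fin (n + 1))).image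
      fun i => (i, i.rev) := by
    ext ⟨a, b⟩
    simp only [mem_VsG_iff, Finset.mem_image, Finset.mem_filter, Finset.mem_univ, true_and,
      Prod.mk.injEq]
    constructor
    · rintro ⟨hlt, rfl⟩
      refine ⟨a, ?_, rfl, rfl⟩
      simp only [Fin.lt_def, Fin.val_rev] at hlt
      omega
    · rintro ⟨i, hi, rfl, rfl⟩
      refine ⟨?_, rfl⟩
      simp only [Fin.lt_def, Fin.val_rev]
      omega
  rw [this, Finset.card_image_of_injective _ fun i j h => congrArg Prod.fst h,
    Fin.card_filter_val_lt]
  omega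

end SimpleGraph.pathGraph

section FixingShare

variable {n : ℕ} {G : SimpleGraph (Fin n)}

lemma FxG_eq_VsG_of_isFixingSet {x : Fin n} (h : isFixingSet G {x}) : FxG G x = VsG G := by
  refine Finset.filter_true_of_mem fun p hp g hgx => ?_
  have hid := h g (by simpa using hgx)
  have hne : p.1 ≠ p.2 := (Finset.mem_filter.mp hp).2.1.ne
  rw [hid, hid]
  exact ⟨hne, hne.symm⟩

lemma fshare_singleton (x : Fin n) : fshare G {x} x = (FxG G x).card := by
  rw [fshare, Finset.card_eq_sum_ones, Nat.cast_sum]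
  refine Finset.sum_congr rfl fun p hp => ?_
  simp [calF, Finset.filter_singleton, hp]

end FixingShare

/-- For the path `P_n` (`n ≥ 2`) with minimum fixing set `D = {v}`, `v` an end vertex:
`f(v;D) = ⌊n/2⌋ = F_sum`, and `F% = 1/⌊n/2⌋`. -/
theorem stmt15 {n : ℕ} (hn : 2 ≤ n) (v : Fin n) (hv : v = ⟨0, by omega⟩) :
    fshare (SimpleGraph.pathGraph n) {v} v = ((n / 2 : ℕ) : ℚ) ∧
      Fsum (SimpleGraph.pathGraph n) {v} = ((n / 2 : ℕ) : ℚ) ∧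
      Fpct (SimpleGraph.pathGraph n) {v} = 1 / ((n / 2 : ℕ) : ℚ) := by
  obtain ⟨m, rfl⟩ : ∃ m, n = m + 1 := ⟨n - 1, by omega⟩
  obtain rfl : v = 0 := hv
  have hshare : fshare (SimpleGraph.pathGraph (m + 1)) {0} 0 = (((m + 1) / 2 : ℕ) : ℚ) := by
    rw [fshare_singleton,
      FxG_eq_VsG_of_isFixingSet SimpleGraph.pathGraph.isFixingSet_singleton_zero,
      SimpleGraph.pathGraph.card_VsG]
  have hsum : Fsum (SimpleGraph.pathGraph (m + 1)) {0} = (((m + 1) / 2 : ℕ) : ℚ) := by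
    rw [Fsum, Finset.sum_singleton, hshare]
  refine ⟨hshare, hsum, ?_⟩
  rw [Fpct, hsum, Finset.card_singleton, Nat.cast_one]
end

section
/- For the cycle C_n (n ≥ 4) with a minimum fixing set D = {u,v} consisting of two non-antipodal vertices, the fixing share of each vertex of D is (1/2)·C(n,2); hence F_sum(C_n) = C(n,2) = n(n−1)/2 and F%(C_n) = 4/(n²−n). -/
open scoped Classical

/-!
In `C_n` (`n ≥ 3`) an automorphism fixing a vertex `x` and its successor fixes everything, so the
stabiliser of `x` consists of the identity and the reflection `y ↦ 2x - y`. Hence `x` fixes exactly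
the pairs `{a, b}` with `a + b ≠ 2x`. As `{u, v}` is fixing, `2u ≠ 2v`, so a pair of `F(u)` lies in
`F(v)` (weight `1/2`) unless its sum is `2v` (weight `1`), and
`f(u; D) = (|F(u)| + #{pairs with sum 2v}) / 2`. Translation shows that the number of pairs with
sum `2x` does not depend on `x`, while `|F(u)| + #{pairs with sum 2u} = C(n, 2)`.
-/

open Finset SimpleGraph
open scoped Fin.CommRing

theorem card_filter_lt_mul_two {α : Type*} [Fintype α] [LinearOrder α] (r : α → α → Prop)
    [DecidableRel r] (hr : ∀ a b, r a b → r b a) :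
    #{p : α × α | p.1 < p.2 ∧ r p.1 p.2} * 2 = #{p : α × α | p.1 ≠ p.2 ∧ r p.1 p.2} := by
  have hswap : #{p : α × α | p.1 < p.2 ∧ r p.1 p.2} = #{p : α × α | p.2 < p.1 ∧ r p.1 p.2} :=
    card_equiv (Equiv.prodComm α α) fun p => by
      simpa using and_congr_right fun _ => ⟨hr _ _, hr _ _⟩
  have hsplit : ({p : α × α | p.1 ≠ p.2 ∧ r p.1 p.2} : Finset (α × α)) =
      univ.filter (fun p : α × α => p.1 < p.2 ∧ r p.1 p.2) ∪
        univ.filter (fun p : α × α => p.2 < p.1 ∧ r p.1 p.2) := by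
    rw [← filter_or]
    exact filter_congr fun p _ => by rw [ne_iff_lt_or_gt, or_and_right]
  rw [hsplit, card_union_of_disjoint, ← hswap, mul_two]
  exact disjoint_filter.2 fun p _ h₁ h₂ => lt_asymm h₁.1 h₂.1

theorem fshare_pair_left {n : ℕ} (G : SimpleGraph (Fin n)) {u v : Fin n}
    (h : FxG G u ≠ FxG G v) :
    fshare G {u, v} u = (#(FxG G u) + #(FxG G u \ FxG G v) : ℚ) / 2 := by
  have hcalF : ∀ p ∈ FxG G u,
      (#(calF G {u, v} p) : ℚ)⁻¹ = if p ∈ FxG G v then 1 / 2 else 1 := by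
    intro p hp
    split_ifs with hpv
    · simp [calF, filter_insert, filter_singleton, hp, hpv, card_pair h]
    · simp [calF, filter_insert, filter_singleton, hp, hpv]
  rw [fshare, sum_congr rfl hcalF, sum_ite, sum_const, sum_const, filter_mem_eq_inter,
    filter_notMem_eq_sdiff, nsmul_eq_mul, nsmul_eq_mul, mul_one]
  have hcard : (#(FxG G u ∩ FxG G v) + #(FxG G u \ FxG G v) : ℚ) = #(FxG G u) := by
    exact_mod_cast card_inter_add_card_sdiff _ _
  linarith

namespace SimpleGraph.cycleGraph

variable {n : ℕ} [NeZero n]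

def addRight (t : Fin n) : cycleGraph n ≃g cycleGraph n where
  toEquiv := Equiv.addRight t
  map_rel_iff' := by simp [cycleGraph_adj', add_sub_add_right_eq_sub]

def subLeft (c : Fin n) : cycleGraph n ≃g cycleGraph n where
  toEquiv := Equiv.subLeft c
  map_rel_iff' := by simp [cycleGraph_adj', sub_sub_sub_cancel_left, or_comm]

@[simp]
theorem addRight_apply (t y : Fin n) : addRight t y = y + t := rfl

@[simp]
theorem subLeft_apply (c y : Fin n) : subLeft c y = c - y := rfl

theorem adj_iff (hn : 2 ≤ n) {a b : Fin n} :
    (cycleGraph n).Adj a b ↔ b = a + 1 ∨ b = a - 1 := by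
  obtain ⟨m, rfl⟩ : ∃ m, n = m + 2 := ⟨n - 2, by omega⟩
  rw [cycleGraph_adj, sub_eq_iff_eq_add', sub_eq_iff_eq_add', eq_sub_iff_add_eq, eq_comm (a := a)]
  tauto

theorem add_one_ne_sub_one (hn : 3 ≤ n) (a : Fin n) : a + 1 ≠ a - 1 := by
  intro h
  have h2 : (2 : Fin n) = 0 := by linear_combination h
  have h2val : (2 : Fin n).val = 2 % n := rfl
  rw [h2, Fin.val_zero, Nat.mod_eq_of_lt (by omega)] at h2val
  omega

theorem iso_apply_add_one_eq_or (hn : 2 ≤ n) (g : cycleGraph n ≃g cycleGraph n) {a : Fin n}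
    (ha : g a = a) : g (a + 1) = a + 1 ∨ g (a + 1) = a - 1 := by
  have hadj := g.map_rel_iff.2 ((adj_iff hn).2 (Or.inl rfl) : (cycleGraph n).Adj a (a + 1))
  rwa [ha, adj_iff hn] at hadj

theorem iso_apply_eq_self_of_fix_add_one (hn : 3 ≤ n) (g : cycleGraph n ≃g cycleGraph n)
    {x : Fin n} (hx : g x = x) (hx1 : g (x + 1) = x + 1) (y : Fin n) : g y = y := by
  have step : ∀ a, g (a - 1) = a - 1 → g a = a → g (a + 1) = a + 1 := fun a ha' ha =>
    (iso_apply_add_one_eq_or (by omega) g ha).resolve_right fun h =>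
      add_one_ne_sub_one hn a (g.injective (h.trans ha'.symm))
  have hk : ∀ k : ℕ, g (x + k) = x + k ∧ g (x + k + 1) = x + k + 1 := by
    intro k
    induction k with
    | zero => simpa using ⟨hx, hx1⟩
    | succ k ih =>
      rw [Nat.cast_succ, ← add_assoc]
      exact ⟨ih.2, step _ (by rw [add_sub_cancel_right]; exact ih.1) ih.2⟩
  simpa using (hk (y - x).val).1

theorem iso_eq_id_or_subLeft (hn : 3 ≤ n) (g : cycleGraph n ≃g cycleGraph n) {x : Fin n}
    (hx : g x = x) : (∀ y, g y = y) ∨ ∀ y, g y = subLeft (x + x) y := by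
  rcases iso_apply_add_one_eq_or (by omega) g hx with h1 | h1
  · exact Or.inl (iso_apply_eq_self_of_fix_add_one hn g hx h1)
  · right
    intro y
    have h := iso_apply_eq_self_of_fix_add_one hn (g.trans (subLeft (x + x))) (x := x)
      (by simp [hx]) (by simp [h1]) y
    simp only [RelIso.trans_apply, subLeft_apply] at h ⊢
    linear_combination -h

theorem mem_FxG_iff (hn : 3 ≤ n) {x : Fin n} {p : Fin n × Fin n} :
    p ∈ FxG (cycleGraph n) x ↔ p.1 < p.2 ∧ p.1 + p.2 ≠ x + x := by
  have hVs : ∃ g : cycleGraph n ≃g cycleGraph n, g p.1 = p.2 :=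
    ⟨addRight (p.2 - p.1), by simp⟩
  rw [FxG, mem_filter, VsG, mem_filter, and_iff_right (mem_univ p), and_iff_left hVs]
  unfold fixesPair
  refine and_congr_right fun hlt => ⟨fun hfix hsum => ?_, fun hsum g hgx => ?_⟩
  · refine (hfix (subLeft (x + x)) (by simp)).1 ?_
    simp [← hsum]
  · rcases iso_eq_id_or_subLeft hn g hgx with hg | hg
    · simp only [hg]
      exact ⟨hlt.ne, hlt.ne'⟩
    · simp only [hg, subLeft_apply]
      constructor <;> intro h <;> apply hsum <;> linear_combination -h

def pairsWithSum (n : ℕ) [NeZero n] (c : Fin n) : Finset (Fin n × Fin n) :=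
  {p | p.1 < p.2 ∧ p.1 + p.2 = c}

theorem card_FxG_add_card_pairsWithSum (hn : 3 ≤ n) (x : Fin n) :
    #(FxG (cycleGraph n) x) + #(pairsWithSum n (x + x)) = n.choose 2 := by
  have hS := Fintype.card_product_filter_lt (α := Fin n)
  rw [Fintype.card_fin] at hS
  rw [← hS, ← card_filter_add_card_filter_not (s := {p : Fin n × Fin n | p.1 < p.2})
    (fun p => p.1 + p.2 ≠ x + x)]
  congr 2 <;> ext p <;> simp [pairsWithSum, mem_FxG_iff hn]

theorem FxG_sdiff_FxG_eq_pairsWithSum (hn : 3 ≤ n) {u v : Fin n} (h : u + u ≠ v + v) :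
    FxG (cycleGraph n) u \ FxG (cycleGraph n) v = pairsWithSum n (v + v) := by
  ext p
  simp only [mem_sdiff, mem_FxG_iff hn, pairsWithSum, mem_filter, mem_univ, true_and]
  constructor
  · rintro ⟨⟨hlt, -⟩, hv⟩
    exact ⟨hlt, not_not.1 fun hne => hv ⟨hlt, hne⟩⟩
  · rintro ⟨hlt, hsum⟩
    exact ⟨⟨hlt, hsum ▸ h.symm⟩, fun hv => hv.2 hsum⟩

theorem card_pairsWithSum_add_self_mul_two (x : Fin n) :
    #(pairsWithSum n (x + x)) * 2 = #{p : Fin n × Fin n | p.1 ≠ p.2 ∧ p.1 + p.2 = x + x} :=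
  card_filter_lt_mul_two (fun a b => a + b = x + x) fun a b h => by rwa [add_comm]

theorem card_pairsWithSum_add_self (x y : Fin n) :
    #(pairsWithSum n (x + x)) = #(pairsWithSum n (y + y)) := by
  have htranslate : #{p : Fin n × Fin n | p.1 ≠ p.2 ∧ p.1 + p.2 = x + x} =
      #{p : Fin n × Fin n | p.1 ≠ p.2 ∧ p.1 + p.2 = y + y} :=
    card_equiv ((Equiv.addRight (y - x)).prodCongr (Equiv.addRight (y - x))) fun p => by
      simp only [mem_filter, mem_univ, true_and, Equiv.prodCongr_apply, Prod.map,
        Equiv.coe_addRight, ne_eq, add_left_inj]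
      exact and_congr_right fun _ => by constructor <;> intro h <;> linear_combination h
  have := card_pairsWithSum_add_self_mul_two x
  rw [htranslate, ← card_pairsWithSum_add_self_mul_two y] at this
  omega

theorem pairsWithSum_add_self_nonempty (hn : 3 ≤ n) (x : Fin n) :
    (pairsWithSum n (x + x)).Nonempty := by
  have hmem : (x - 1, x + 1) ∈
      ({p : Fin n × Fin n | p.1 ≠ p.2 ∧ p.1 + p.2 = x + x} : Finset (Fin n × Fin n)) := by
    simp only [mem_filter, mem_univ, true_and]
    exact ⟨(add_one_ne_sub_one hn x).symm, by ring⟩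
  rw [← card_pos, ← Nat.mul_pos_iff_of_pos_right two_pos, card_pairsWithSum_add_self_mul_two]
  exact card_pos.2 ⟨_, hmem⟩

theorem fshare_pair_eq_choose_two_div_two (hn : 3 ≤ n) {u v : Fin n} (h : u + u ≠ v + v) :
    fshare (cycleGraph n) {u, v} u = n.choose 2 / 2 := by
  have hsdiff := FxG_sdiff_FxG_eq_pairsWithSum hn h
  have hne : FxG (cycleGraph n) u ≠ FxG (cycleGraph n) v := by
    intro heq
    have hnonempty := pairsWithSum_add_self_nonempty hn v
    rw [← hsdiff, heq, sdiff_self] at hnonempty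
    exact not_nonempty_empty hnonempty
  rw [fshare_pair_left _ hne, hsdiff, card_pairsWithSum_add_self v u]
  exact_mod_cast congrArg (fun k : ℕ => (k : ℚ) / 2) (card_FxG_add_card_pairsWithSum hn u)

theorem add_self_ne_add_self_of_isFixingSet (hn : 3 ≤ n) {u v : Fin n}
    (hD : isFixingSet (cycleGraph n) ↑({u, v} : Finset (Fin n))) : u + u ≠ v + v := by
  intro h
  -- the reflection about `u` then fixes `u` and `v` but moves `u + 1` to `u - 1`
  have hfix := hD (subLeft (u + u)) (by
    simp only [coe_pair, Set.mem_insert_iff, Set.mem_singleton_iff, forall_eq_or_imp, forall_eq,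
      subLeft_apply]
    exact ⟨by ring, by linear_combination h⟩) (u + 1)
  refine add_one_ne_sub_one hn u ?_
  rw [← hfix, subLeft_apply]
  ring

end SimpleGraph.cycleGraph

theorem stmt16_general {n : ℕ} (hn : 4 ≤ n) (u v : Fin n) (huv : u ≠ v)
    (hD : isMinFixingSet (SimpleGraph.cycleGraph n) {u, v}) :
    (∀ x ∈ ({u, v} : Finset (Fin n)),
        fshare (SimpleGraph.cycleGraph n) {u, v} x = (n.choose 2 : ℚ) / 2) ∧
      Fsum (SimpleGraph.cycleGraph n) {u, v} = (n.choose 2 : ℚ) ∧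
      Fpct (SimpleGraph.cycleGraph n) {u, v} = 4 / ((n : ℚ) ^ 2 - n) := by
  have : NeZero n := ⟨by omega⟩
  have h3 : 3 ≤ n := by omega
  have hsum := cycleGraph.add_self_ne_add_self_of_isFixingSet h3 hD.1
  have hu := cycleGraph.fshare_pair_eq_choose_two_div_two h3 hsum
  have hv := cycleGraph.fshare_pair_eq_choose_two_div_two h3 hsum.symm
  rw [pair_comm] at hv
  have hFsum : Fsum (cycleGraph n) {u, v} = n.choose 2 := by
    rw [Fsum, sum_pair huv, hu, hv, add_halves]
  refine ⟨by simp [hu, hv], hFsum, ?_⟩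
  rw [Fpct, hFsum, card_pair huv, Nat.cast_choose_two, div_div_eq_mul_div]
  ring

/-- For the cycle `C_n` (`n ≥ 4`) with minimum fixing set `D = {u,v}`, `u,v` non-antipodal:
each vertex of `D` has fixing share `C(n,2)/2`; hence `F_sum = C(n,2)` and `F% = 4/(n²-n)`. -/
theorem stmt16 {n : ℕ} (hn : 4 ≤ n) (u v : Fin n) (huv : u ≠ v)
    (hna : (SimpleGraph.cycleGraph n).dist u v ≠ n / 2)
    (hD : isMinFixingSet (SimpleGraph.cycleGraph n) {u, v}) :
    (∀ x ∈ ({u, v} : Finset (Fin n)),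
        fshare (SimpleGraph.cycleGraph n) {u, v} x = (n.choose 2 : ℚ) / 2) ∧
      Fsum (SimpleGraph.cycleGraph n) {u, v} = (n.choose 2 : ℚ) ∧
      Fpct (SimpleGraph.cycleGraph n) {u, v} = 4 / ((n : ℚ) ^ 2 - n) :=
  stmt16_general hn u v huv hD
end

section
/- For every positive integer N there exists a graph G with dtr(G) − Det(G) ≥ N. Concretely, for k ≥ max{3, (N+3)/2}, the bipartite graph G on U ∪ W, where U = {u_1,...,u_{2^k−2}} with u_j labeled by the binary representation of j, W = {w_1,...,w_{k−1}}, and w_i adjacent to u_j iff the binary digit sum of j equals i, satisfies Det(G) = 2^k − (k+1) and dtr(G) = 2^k + k − 4, so dtr(G) − Det(G) = 2k − 3 ≥ N. -/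
open scoped Classical

/-- `E` is a determining set: any automorphism fixing `E` pointwise is the identity. -/
def isDeterminingSet {V : Type*} (G : SimpleGraph V) (E : Set V) : Prop :=
  ∀ g : G ≃g G, (∀ v ∈ E, g v = v) → ∀ v : V, g v = v

/-- The graph of the construction: vertices `u_j` (`j = 1, …, 2^k - 2`, encoded as
`Fin (2^k - 2)` via `j = j' + 1`) and `w_i` (`i = 1, …, k-1`, encoded as `Fin (k-1)` via
`i = i' + 1`), with `w_i` adjacent to `u_j` iff the binary digit sum of `j` equals `i`. -/
def constructionGraph (k : ℕ) : SimpleGraph (Fin (2 ^ k - 2) ⊕ Fin (k - 1)) :=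
  SimpleGraph.fromRel (fun a b =>
    match a, b with
    | Sum.inl j, Sum.inr i => (Nat.digits 2 (j.val + 1)).sum = i.val + 1
    | _, _ => False)

/-!
The construction graph is the bipartite graph of a map `f : U → W` (here `u_j ↦ w_i` with `i` the
binary digit sum of `j`): a disjoint union of stars centred at `W` whose leaf sets are the fibres
of `f`, each of which has at least two points. Permuting leaves inside fibres gives automorphisms,
so a determining set `E` must leave `f` injective on the leaves outside `E`. Conversely, if it does,
every centre has a leaf in `E`, so an automorphism fixing `E` fixes the centres and then, by
injectivity, the leaves. Hence `E` is determining iff it misses at most one leaf per fibre, which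
gives `Det = |U| - |W|` and `dtr = |U| + |W| - 1`.
-/

def funGraph {α β : Type*} (f : α → β) : SimpleGraph (α ⊕ β) :=
  SimpleGraph.fromRel fun x y =>
    match x, y with
    | .inl a, .inr b => f a = b
    | _, _ => False

section FunGraph

variable {α β : Type*} (f : α → β)

@[simp]
lemma funGraph_adj_inl_inr {a : α} {b : β} : (funGraph f).Adj (.inl a) (.inr b) ↔ f a = b := by
  simp [funGraph]

@[simp]
lemma funGraph_adj_inr_inl {a : α} {b : β} : (funGraph f).Adj (.inr b) (.inl a) ↔ f a = b := by
  simp [funGraph]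

@[simp]
lemma not_funGraph_adj_inl_inl {a a' : α} : ¬ (funGraph f).Adj (.inl a) (.inl a') := by
  simp [funGraph]

@[simp]
lemma not_funGraph_adj_inr_inr {b b' : β} : ¬ (funGraph f).Adj (.inr b) (.inr b') := by
  simp [funGraph]

lemma funGraph_adj_inl_iff {a : α} {v : α ⊕ β} : (funGraph f).Adj (.inl a) v ↔ v = .inr (f a) := by
  cases v <;> simp [eq_comm]

def funGraph.autOfPerm (σ : Equiv.Perm α) (hσ : ∀ a, f (σ a) = f a) :
    funGraph f ≃g funGraph f where
  toEquiv := σ.sumCongr (Equiv.refl β)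
  map_rel_iff' := by rintro (a | b) (a' | b') <;> simp [hσ]

lemma injOn_of_isDeterminingSet_funGraph {E : Set (α ⊕ β)}
    (hE : isDeterminingSet (funGraph f) E) : Set.InjOn f {a | .inl a ∉ E} := by
  intro a₁ ha₁ a₂ ha₂ hfa
  by_contra hne
  have hswap : ∀ a, f (Equiv.swap a₁ a₂ a) = f a := by
    intro a
    rw [Equiv.swap_apply_def]
    split_ifs <;> simp_all
  have hfix := hE (funGraph.autOfPerm f _ hswap) (fun v hv => ?_) (.inl a₁)
  · simp only [funGraph.autOfPerm, Equiv.Perm.sumCongr_swap_refl, RelIso.coe_fn_mk,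
      Equiv.swap_apply_left, Sum.inl.injEq] at hfix
    exact hne hfix.symm
  simp only [funGraph.autOfPerm, Equiv.Perm.sumCongr_swap_refl, RelIso.coe_fn_mk]
  exact Equiv.swap_apply_of_ne_of_ne (ne_of_mem_of_not_mem hv ha₁) (ne_of_mem_of_not_mem hv ha₂)

lemma isDeterminingSet_funGraph_of_injOn (hf : ∀ b, (f ⁻¹' {b}).Nontrivial) {E : Set (α ⊕ β)}
    (hinj : Set.InjOn f {a | .inl a ∉ E}) : isDeterminingSet (funGraph f) E := by
  intro g hg
  have fix_inr : ∀ b, g (.inr b) = .inr b := by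
    intro b
    obtain ⟨a, rfl, ha⟩ : ∃ a, f a = b ∧ .inl a ∈ E := by
      obtain ⟨a₁, rfl, a₂, h₂, hne⟩ := hf b
      by_contra! h
      exact hne (hinj (h a₁ rfl) (h a₂ h₂) h₂.symm)
    have hadj := g.map_adj_iff.2 ((funGraph_adj_inl_inr f (a := a)).2 rfl)
    rwa [hg _ ha, funGraph_adj_inl_iff] at hadj
  have fix_inl : ∀ a, g (.inl a) = .inl a := by
    intro a
    obtain ⟨a', hga, hfa⟩ : ∃ a', g (.inl a) = .inl a' ∧ f a' = f a := by
      have hadj := g.map_adj_iff.2 ((funGraph_adj_inl_inr f (a := a)).2 rfl)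
      rw [fix_inr] at hadj
      rcases h : g (.inl a) with a' | b' <;> simp_all
    by_cases ha : .inl a ∈ E
    · exact hg _ ha
    by_cases ha' : .inl a' ∈ E
    · rw [g.injective (hga.trans (hg _ ha').symm)]
      exact hg _ ha'
    · rw [hga, hinj ha' ha hfa]
  rintro (a | b)
  exacts [fix_inl a, fix_inr b]

lemma isDeterminingSet_funGraph_iff (hf : ∀ b, (f ⁻¹' {b}).Nontrivial) (E : Set (α ⊕ β)) :
    isDeterminingSet (funGraph f) E ↔ Set.InjOn f {a | .inl a ∉ E} :=
  ⟨injOn_of_isDeterminingSet_funGraph f, isDeterminingSet_funGraph_of_injOn f hf⟩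

variable [Fintype α] [Fintype β]

lemma isLeast_card_isDeterminingSet_funGraph (hf : ∀ b, (f ⁻¹' {b}).Nontrivial) :
    IsLeast {m | ∃ E : Finset (α ⊕ β), isDeterminingSet (funGraph f) ↑E ∧ E.card = m}
      (Fintype.card α - Fintype.card β) := by
  simp_rw [isDeterminingSet_funGraph_iff f hf]
  refine ⟨?_, ?_⟩
  · obtain ⟨s, hs⟩ : ∃ s : β → α, Function.RightInverse s f :=
      ⟨_, Function.rightInverse_surjInv fun b => (hf b).nonempty⟩
    refine ⟨(Finset.univ.image s)ᶜ.map .inl, ?_, ?_⟩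
    · have hrange : {a | Sum.inl a ∉ (((Finset.univ.image s)ᶜ.map .inl : Finset (α ⊕ β)) :
          Set (α ⊕ β))} = Set.range s := by ext; simp
      rw [hrange]
      exact Function.Injective.injOn_range (hs.comp_eq_id ▸ Function.injective_id)
    · rw [Finset.card_map, Finset.card_compl, Finset.card_image_of_injective _ hs.injective,
        Finset.card_univ]
  · rintro _ ⟨E, hE, rfl⟩
    have hcompl : {a | Sum.inl a ∉ (E : Set (α ⊕ β))} = ↑(E.toLeftᶜ) := by ext; simp
    rw [hcompl] at hE
    have := Finset.card_le_card_of_injOn f (fun _ _ => Finset.mem_coe.2 (Finset.mem_univ _)) hE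
    rw [Finset.card_compl, Finset.card_univ] at this
    have := E.card_toLeft_le
    omega

lemma isLeast_card_forall_isDeterminingSet_funGraph [Nonempty β]
    (hf : ∀ b, (f ⁻¹' {b}).Nontrivial) :
    IsLeast {m | ∀ E : Finset (α ⊕ β), E.card = m → isDeterminingSet (funGraph f) ↑E}
      (Fintype.card α + Fintype.card β - 1) := by
  simp_rw [isDeterminingSet_funGraph_iff f hf]
  refine ⟨fun E hE => ?_, fun m hm => ?_⟩
  · intro a₁ h₁ a₂ h₂ _
    by_contra hne
    have hpair : ({.inl a₁, .inl a₂} : Finset (α ⊕ β)) ⊆ Eᶜ := by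
      simp only [Finset.insert_subset_iff, Finset.singleton_subset_iff, Finset.mem_compl]
      exact ⟨h₁, h₂⟩
    have := Finset.card_le_card hpair
    rw [Finset.card_pair (Sum.inl_injective.ne hne), Finset.card_compl, hE,
      Fintype.card_sum] at this
    omega
  · by_contra! hlt
    obtain ⟨a₁, h₁, a₂, h₂, hne⟩ := hf (Classical.arbitrary β)
    set P : Finset (α ⊕ β) := {.inl a₁, .inl a₂}
    have hP : P.card = 2 := Finset.card_pair (Sum.inl_injective.ne hne)
    obtain ⟨E, hEP, hE⟩ := Finset.exists_subset_card_eq (s := Pᶜ) (n := m)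
      (by rw [Finset.card_compl, hP, Fintype.card_sum]; omega)
    have h₁E : Sum.inl a₁ ∉ E := fun h => Finset.mem_compl.1 (hEP h) (by simp [P])
    have h₂E : Sum.inl a₂ ∉ E := fun h => Finset.mem_compl.1 (hEP h) (by simp [P])
    exact hne (hm E hE h₁E h₂E (h₁.trans h₂.symm))

end FunGraph

def binaryDigitSum (n : ℕ) : ℕ := (Nat.digits 2 n).sum

lemma binaryDigitSum_two_mul (m : ℕ) : binaryDigitSum (2 * m) = binaryDigitSum m := by
  rcases m.eq_zero_or_pos with rfl | hm
  · rfl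
  · simp [binaryDigitSum, Nat.digits_def' one_lt_two (by omega : 0 < 2 * m)]

lemma binaryDigitSum_two_mul_add_one (m : ℕ) :
    binaryDigitSum (2 * m + 1) = binaryDigitSum m + 1 := by
  rw [binaryDigitSum, add_comm, Nat.digits_add 2 one_lt_two 1 m one_lt_two (Or.inl one_ne_zero),
    List.sum_cons, add_comm, binaryDigitSum]

lemma binaryDigitSum_pos {n : ℕ} (hn : n ≠ 0) : 0 < binaryDigitSum n :=
  Nat.pos_of_ne_zero fun h =>
    Nat.getLast_digit_ne_zero 2 hn (List.sum_eq_zero_iff.1 h _ (List.getLast_mem _))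

lemma binaryDigitSum_lt {n k : ℕ} (h : n + 1 < 2 ^ k) : binaryDigitSum n < k := by
  induction n using Nat.strong_induction_on generalizing k with
  | _ n ih =>
  obtain ⟨m, rfl | rfl⟩ := Nat.even_or_odd' n
  · rcases m.eq_zero_or_pos with rfl | hm
    · cases k with
      | zero => simp at h
      | succ k => simp [binaryDigitSum]
    · rw [binaryDigitSum_two_mul]
      exact ih m (by omega) (by omega)
  · cases k with
    | zero => simp at h
    | succ k =>
      rw [binaryDigitSum_two_mul_add_one]
      have := ih m (by omega) (k := k) (by rw [pow_succ] at h; omega)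
      omega

lemma binaryDigitSum_two_pow_sub_one (i : ℕ) : binaryDigitSum (2 ^ i - 1) = i := by
  induction i with
  | zero => rfl
  | succ i ih =>
    have : 2 ^ (i + 1) - 1 = 2 * (2 ^ i - 1) + 1 := by
      have := Nat.one_le_two_pow (n := i)
      rw [pow_succ]; omega
    rw [this, binaryDigitSum_two_mul_add_one, ih]

def wIndex (k : ℕ) (j : Fin (2 ^ k - 2)) : Fin (k - 1) :=
  ⟨binaryDigitSum (j + 1) - 1, by
    have := binaryDigitSum_pos (Nat.add_one_ne_zero j)
    have := binaryDigitSum_lt (n := j + 1) (k := k) (by omega)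
    omega⟩

lemma wIndex_eq_iff {k : ℕ} {j : Fin (2 ^ k - 2)} {i : Fin (k - 1)} :
    wIndex k j = i ↔ binaryDigitSum (j + 1) = i + 1 := by
  have := binaryDigitSum_pos (Nat.add_one_ne_zero j)
  rw [Fin.ext_iff]
  simp only [wIndex]
  omega

theorem constructionGraph_eq_funGraph (k : ℕ) : constructionGraph k = funGraph (wIndex k) := by
  ext (j | i) (j' | i') <;> simp [constructionGraph, funGraph, wIndex_eq_iff, binaryDigitSum]

lemma wIndex_preimage_nontrivial {k : ℕ} (i : Fin (k - 1)) : (wIndex k ⁻¹' {i}).Nontrivial := by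
  have hi := i.isLt
  have h₁ : 2 ^ (i.val + 1) ≥ 2 := Nat.le_self_pow (by omega) 2
  have h₂ : 2 ^ (i.val + 2) ≤ 2 ^ k := Nat.pow_le_pow_right two_pos (by omega)
  have h₃ : 2 ^ (i.val + 2) = 2 * 2 ^ (i.val + 1) := by rw [pow_succ, mul_comm]
  -- `u_j` for `j = 2 ^ (i + 1) - 1` and `j = 2 * (2 ^ (i + 1) - 1)` both have digit sum `i + 1`.
  refine ⟨⟨2 ^ (i.val + 1) - 2, by omega⟩, ?_, ⟨2 ^ (i.val + 2) - 3, by omega⟩, ?_, ?_⟩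
  · rw [Set.mem_preimage, Set.mem_singleton_iff, wIndex_eq_iff]
    have : 2 ^ (i.val + 1) - 2 + 1 = 2 ^ (i.val + 1) - 1 := by omega
    simp only [this, binaryDigitSum_two_pow_sub_one]
  · rw [Set.mem_preimage, Set.mem_singleton_iff, wIndex_eq_iff]
    have : 2 ^ (i.val + 2) - 3 + 1 = 2 * (2 ^ (i.val + 1) - 1) := by omega
    simp only [this, binaryDigitSum_two_mul, binaryDigitSum_two_pow_sub_one]
  · rw [Ne, Fin.ext_iff]
    dsimp only
    omega

theorem stmt19_general (N : ℕ) (k : ℕ) (hkN : N + 3 ≤ 2 * k) :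
    IsLeast {m : ℕ | ∃ E : Finset (Fin (2 ^ k - 2) ⊕ Fin (k - 1)),
        isDeterminingSet (constructionGraph k) ↑E ∧ E.card = m} (2 ^ k - (k + 1)) ∧
    IsLeast {m : ℕ | ∀ E : Finset (Fin (2 ^ k - 2) ⊕ Fin (k - 1)),
        E.card = m → isDeterminingSet (constructionGraph k) ↑E} (2 ^ k + k - 4) ∧
    (2 ^ k + k - 4) - (2 ^ k - (k + 1)) = 2 * k - 3 ∧ N ≤ 2 * k - 3 := by
  have h4 : 4 ≤ 2 ^ k := Nat.pow_le_pow_right two_pos (by omega : 2 ≤ k)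
  have hk : k < 2 ^ k := Nat.lt_two_pow_self
  have : Nonempty (Fin (k - 1)) := ⟨⟨0, by omega⟩⟩
  have hDet := isLeast_card_isDeterminingSet_funGraph (wIndex k) wIndex_preimage_nontrivial
  have hdtr := isLeast_card_forall_isDeterminingSet_funGraph (wIndex k) wIndex_preimage_nontrivial
  simp only [← constructionGraph_eq_funGraph, Fintype.card_fin] at hDet hdtr
  refine ⟨?_, ?_, by omega, by omega⟩
  · convert hDet using 1
    omega
  · convert hdtr using 1
    omega

/-- For every positive integer `N` and every `k ≥ max{3, (N+3)/2}` (i.e. `3 ≤ k` and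
`N + 3 ≤ 2k`), the construction graph `G` satisfies `Det(G) = 2^k - (k+1)`,
`dtr(G) = 2^k + k - 4`, and hence `dtr(G) - Det(G) = 2k - 3 ≥ N`. -/
theorem stmt19 (N : ℕ) (hN : 0 < N) (k : ℕ) (hk3 : 3 ≤ k) (hkN : N + 3 ≤ 2 * k) :
    IsLeast {m : ℕ | ∃ E : Finset (Fin (2 ^ k - 2) ⊕ Fin (k - 1)),
        isDeterminingSet (constructionGraph k) ↑E ∧ E.card = m} (2 ^ k - (k + 1)) ∧
    IsLeast {m : ℕ | ∀ E : Finset (Fin (2 ^ k - 2) ⊕ Fin (k - 1)),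
        E.card = m → isDeterminingSet (constructionGraph k) ↑E} (2 ^ k + k - 4) ∧
    (2 ^ k + k - 4) - (2 ^ k - (k + 1)) = 2 * k - 3 ∧ N ≤ 2 * k - 3 :=
  stmt19_general N k hkN
end
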